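/- For every integer N ≥ 3, every λ ∈ [0,1], and every positive semidefinite complex 2^N × 2^N matrix ρ, one has Tr(W^λ ρ) ≥ λ·Tr(W ρ). In particular, if Tr(W ρ) ≥ 0 (as holds for all biseparable states by Tóth–Gühne), then also Tr(W^λ ρ) ≥ 0, so W^λ is again a genuine multipartite entanglement witness. -/

import Mathlib

open Matrix
open scoped ComplexOrder

noncomputable section

/-- The space of operators on `N` qubits: complex `2^N × 2^N` matrices, with the
`N`-fold tensor-product structure made explicit by indexing rows and columns by
functions `Fin N → Fin 2`. -/
abbrev QM (N : ℕ) := Matrix (Fin N → Fin 2) (Fin N → Fin 2) ℂ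

/-- The Pauli matrix σ_x. -/
def sigx : Matrix (Fin 2) (Fin 2) ℂ := !![0, 1; 1, 0]

/-- The Pauli matrix σ_z. -/
def sigz : Matrix (Fin 2) (Fin 2) ℂ := !![1, 0; 0, -1]

/-- The tensor (Kronecker) product `f 0 ⊗ f 1 ⊗ ⋯ ⊗ f (N-1)` of single-qubit operators. -/
def tensorAll (N : ℕ) (f : Fin N → Matrix (Fin 2) (Fin 2) ℂ) : QM N :=
  Matrix.of fun v w => ∏ i, f i (v i) (w i)

/-- The single-qubit operator `M` acting on qubit `m`, tensored with the identity
on all other qubits. -/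
def site (N : ℕ) (m : Fin N) (M : Matrix (Fin 2) (Fin 2) ℂ) : QM N :=
  tensorAll N (fun i => if i = m then M else 1)

/-- GHZ stabilizer generator `S_1 = σ_x^(1) σ_x^(2) ⋯ σ_x^(N)`. -/
def ghzS1 (N : ℕ) : QM N := tensorAll N (fun _ => sigx)

/-- GHZ stabilizer generator with σ_z on qubits `m-1` and `m` (0-based `m : Fin N`,
`m ≠ 0`); it represents the 1-based generator `S_{m+1} = σ_z^{(m)} σ_z^{(m+1)}`. -/
def ghzSz (N : ℕ) (m : Fin N) : QM N :=
  tensorAll N (fun i => if i.val = m.val - 1 ∨ i = m then sigz else 1)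

/-- The product `∏_{m=2}^{N} (I + S_m)/2` appearing in the GHZ witness
(the factors pairwise commute, so the list ordering is immaterial). -/
def ghzProd (N : ℕ) : QM N :=
  (((List.finRange N).filter (fun m => m.val ≠ 0)).map
    (fun m => (1/2 : ℂ) • ((1 : QM N) + ghzSz N m))).prod

/-- The GHZ genuine-multipartite-entanglement witness
`W = 3 I − 2 [ (I + S_1)/2 + ∏_{m=2}^N (I + S_m)/2 ]`. -/
def ghzWitness (N : ℕ) : QM N :=
  (3 : ℂ) • (1 : QM N) -
    (2 : ℂ) • ((1/2 : ℂ) • ((1 : QM N) + ghzS1 N) + ghzProd N)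

/-- The modified (unsharp) GHZ witness
`W^λ = 3 I − 2 [ (I + λ S_1)/2 + ∏_{m=2}^N (I + S_m)/2 ]`. -/
def ghzWitnessMod (N : ℕ) (lam : ℝ) : QM N :=
  (3 : ℂ) • (1 : QM N) -
    (2 : ℂ) • ((1/2 : ℂ) • ((1 : QM N) + (lam : ℂ) • ghzS1 N) + ghzProd N)

/-! Writing `P = ∏_{m≥2} (I + S_m)/2`, one has `W^λ = λ W + 2(1 - λ)(I - P)`. The generators
`S_m` with `m ≥ 2` are diagonal with `±1` entries, so every factor `(I + S_m)/2` is a diagonal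
projection, hence so is `P`, and `I - P` is positive semidefinite. Thus `Tr((I - P) ρ) ≥ 0`, and
both claims follow from `0 ≤ λ ≤ 1`. -/

lemma sigz_isDiag : sigz.IsDiag := by
  intro i j h
  fin_cases i <;> fin_cases j <;> simp_all [sigz]

lemma tensorAll_eq_diagonal {N : ℕ} {f : Fin N → Matrix (Fin 2) (Fin 2) ℂ}
    (hf : ∀ i, (f i).IsDiag) : tensorAll N f = diagonal (tensorAll N f).diag := by
  ext v w
  rcases eq_or_ne v w with rfl | hvw
  · simp [tensorAll]
  · obtain ⟨i, hi⟩ := Function.ne_iff.mp hvw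
    simpa [tensorAll, hvw] using Finset.prod_eq_zero (Finset.mem_univ i) (hf i hi)

lemma ghzSz_eq_diagonal (N : ℕ) (m : Fin N) : ghzSz N m = diagonal (ghzSz N m).diag :=
  tensorAll_eq_diagonal fun i => by split_ifs; exacts [sigz_isDiag, isDiag_one]

lemma diag_ghzSz_mul_self (N : ℕ) (m : Fin N) : (ghzSz N m).diag * (ghzSz N m).diag = 1 := by
  funext v
  simp only [ghzSz, tensorAll, Pi.mul_apply, diag_apply, of_apply, Pi.one_apply,
    ← Finset.prod_mul_distrib]
  refine Finset.prod_eq_one fun i _ => ?_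
  split_ifs
  · generalize v i = a
    fin_cases a <;> simp [sigz]
  · simp

lemma isIdempotentElem_half_smul_one_add {A : Type*} [Ring A] [Algebra ℂ A] {s : A}
    (hs : s * s = 1) : IsIdempotentElem ((1 / 2 : ℂ) • (1 + s)) := by
  rw [IsIdempotentElem, smul_mul_smul_comm]
  simp only [add_mul, mul_add, one_mul, mul_one, hs]
  module

lemma ghzProd_eq_diagonal (N : ℕ) :
    ghzProd N = diagonal ((((List.finRange N).filter (fun m => m.val ≠ 0)).map
      fun m => (1 / 2 : ℂ) • (1 + (ghzSz N m).diag)).prod) := by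
  rw [← diagonalAlgHom_apply ℂ, map_list_prod, List.map_map, ghzProd]
  congr 1
  refine List.map_congr_left fun m _ => ?_
  rw [Function.comp_apply, map_smul, map_add, map_one, diagonalAlgHom_apply,
    ← ghzSz_eq_diagonal]

lemma posSemidef_one_sub_diagonal {n : Type*} [Fintype n] [DecidableEq n] {p : n → ℂ}
    (hp : IsIdempotentElem p) : (1 - diagonal p).PosSemidef := by
  rw [← diagonal_one, diagonal_sub, posSemidef_diagonal_iff]
  intro v
  obtain h | h := IsIdempotentElem.iff_eq_zero_or_one.mp (hp.map (Pi.evalRingHom _ v)) <;>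
    simp [show p v = _ from h]

lemma one_sub_ghzProd_posSemidef (N : ℕ) : (1 - ghzProd N).PosSemidef := by
  rw [ghzProd_eq_diagonal]
  refine posSemidef_one_sub_diagonal (List.prod_induction _ (fun _ _ => .mul) .one ?_)
  simp only [List.mem_map]
  rintro _ ⟨m, _, rfl⟩
  exact isIdempotentElem_half_smul_one_add (diag_ghzSz_mul_self N m)

open scoped MatrixOrder in
lemma Matrix.PosSemidef.trace_mul_nonneg {n 𝕜 : Type*} [Fintype n] [RCLike 𝕜]
    {A B : Matrix n n 𝕜} (hA : A.PosSemidef) (hB : B.PosSemidef) : 0 ≤ (A * B).trace := by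
  classical
  obtain ⟨C, rfl⟩ := CStarAlgebra.nonneg_iff_eq_star_mul_self.mp hB.nonneg
  rw [star_eq_conjTranspose, ← Matrix.mul_assoc, trace_mul_comm]
  simpa [Matrix.mul_assoc] using (hA.mul_mul_conjTranspose_same C).trace_nonneg

lemma ghzWitnessMod_eq_smul_ghzWitness_add (N : ℕ) (lam : ℝ) :
    ghzWitnessMod N lam =
      (lam : ℂ) • ghzWitness N + ((2 * (1 - lam) : ℝ) : ℂ) • (1 - ghzProd N) := by
  rw [ghzWitnessMod, ghzWitness]
  push_cast
  module

lemma re_trace_ghzWitnessMod_mul (N : ℕ) (lam : ℝ) (ρ : QM N) :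
    (ghzWitnessMod N lam * ρ).trace.re =
      lam * (ghzWitness N * ρ).trace.re + 2 * (1 - lam) * ((1 - ghzProd N) * ρ).trace.re := by
  rw [ghzWitnessMod_eq_smul_ghzWitness_add, add_mul, smul_mul_assoc, smul_mul_assoc, trace_add,
    trace_smul, trace_smul]
  simp only [Complex.add_re, smul_eq_mul, Complex.re_ofReal_mul]

theorem ghz_modifiedWitness_trace_ge
    (N : ℕ) (lam : ℝ) (hlam : lam ∈ Set.Icc (0 : ℝ) 1)
    (ρ : QM N) (hρ : ρ.PosSemidef) :
    lam * ((ghzWitness N * ρ).trace).re ≤ ((ghzWitnessMod N lam * ρ).trace).re ∧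
      (0 ≤ ((ghzWitness N * ρ).trace).re → 0 ≤ ((ghzWitnessMod N lam * ρ).trace).re) := by
  obtain ⟨hlam₀, hlam₁⟩ := hlam
  have hP : 0 ≤ ((1 - ghzProd N) * ρ).trace.re :=
    (Complex.nonneg_iff.mp ((one_sub_ghzProd_posSemidef N).trace_mul_nonneg hρ)).1
  rw [re_trace_ghzWitnessMod_mul]
  refine ⟨?_, fun hW => ?_⟩ <;> nlinarith

end
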